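/- arXiv:1210.4594 — 2 statements merged into one kernel-verified Lean document; each statement's English description precedes it below -/
import Mathlib

section
/- If B_{b,t} and B_{b',t'} are two blossoms with b ∈ B_{b',t'}, then B_{b,t} is a proper subset of B_{b',t'}. -/
attribute [local instance] Classical.propDecidable

variable {V : Type*} [DecidableEq V]

namespace MV

/-- A walk is alternating (w.r.t. matching `M`) in the sense used for alternating paths
starting at an unmatched vertex: the `i`-th edge is matched iff `i` is odd. -/
def IsAlt (G : SimpleGraph V) (M : G.Subgraph) {a b : V} (w : G.Walk a b) : Prop :=
  ∀ i (h : i < w.edges.length), (w.edges.get ⟨i, h⟩ ∈ M.edgeSet ↔ Odd i)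

/-- length of a minimum even alternating path from an unmatched vertex to `v`. -/
noncomputable def evenlevel (G : SimpleGraph V) (M : G.Subgraph) (v : V) : ℕ∞ :=
  sInf {n : ℕ∞ | ∃ (f : V) (w : G.Walk f v),
    f ∉ M.verts ∧ w.IsPath ∧ IsAlt G M w ∧ Even w.length ∧ n = (w.length : ℕ∞)}

/-- length of a minimum odd alternating path from an unmatched vertex to `v`. -/
noncomputable def oddlevel (G : SimpleGraph V) (M : G.Subgraph) (v : V) : ℕ∞ :=
  sInf {n : ℕ∞ | ∃ (f : V) (w : G.Walk f v),
    f ∉ M.verts ∧ w.IsPath ∧ IsAlt G M w ∧ Odd w.length ∧ n = (w.length : ℕ∞)}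

noncomputable def tenacity (G : SimpleGraph V) (M : G.Subgraph) (v : V) : ℕ∞ :=
  evenlevel G M v + oddlevel G M v

noncomputable def minlevel (G : SimpleGraph V) (M : G.Subgraph) (v : V) : ℕ∞ :=
  min (evenlevel G M v) (oddlevel G M v)

noncomputable def maxlevel (G : SimpleGraph V) (M : G.Subgraph) (v : V) : ℕ∞ :=
  max (evenlevel G M v) (oddlevel G M v)

/-- the length of a minimum length augmenting path w.r.t. `M` (`⊤` if none exists). -/
noncomputable def lm (G : SimpleGraph V) (M : G.Subgraph) : ℕ∞ :=
  sInf {n : ℕ∞ | ∃ (f g : V) (w : G.Walk f g), f ∉ M.verts ∧ g ∉ M.verts ∧ f ≠ g ∧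
    w.IsPath ∧ IsAlt G M w ∧ Odd w.length ∧ n = (w.length : ℕ∞)}

/-- `w` is a minimum even- or odd-length alternating path from an unmatched vertex to `v`
  (an `evenlevel(v)` or `oddlevel(v)` path). -/
def IsMinPathTo (G : SimpleGraph V) (M : G.Subgraph) (v f : V) (w : G.Walk f v) : Prop :=
  f ∉ M.verts ∧ w.IsPath ∧ IsAlt G M w ∧
    ((Even w.length ∧ (w.length : ℕ∞) = evenlevel G M v) ∨
     (Odd w.length ∧ (w.length : ℕ∞) = oddlevel G M v))

/-- `b` is the vertex of tenacity greater than `tenacity v` on `w` furthest from the start. -/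
def IsFurthestHigh (G : SimpleGraph V) (M : G.Subgraph) (v : V) {f v' : V}
    (w : G.Walk f v') (b : V) : Prop :=
  ∃ hb : b ∈ w.support, tenacity G M v < tenacity G M b ∧
    ∀ u, ∀ hu : u ∈ w.support, tenacity G M v < tenacity G M u →
      (w.takeUntil u hu).length ≤ (w.takeUntil b hb).length

/-- `b` is the base of `v`: the furthest higher-tenacity vertex on every minimum
even or odd alternating path to `v`. -/
def IsBase (G : SimpleGraph V) (M : G.Subgraph) (v b : V) : Prop :=
  ∀ (f : V) (w : G.Walk f v), IsMinPathTo G M v f w → IsFurthestHigh G M v w b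

/-- minimum even length alternating path from `b` to `v` starting with an unmatched edge
  (`evenlevel(b; v)`). -/
noncomputable def evenlevelFrom (G : SimpleGraph V) (M : G.Subgraph) (b v : V) : ℕ∞ :=
  sInf {n : ℕ∞ | ∃ w : G.Walk b v,
    w.IsPath ∧ IsAlt G M w ∧ Even w.length ∧ n = (w.length : ℕ∞)}

/-- minimum odd length alternating path from `b` to `v` starting with an unmatched edge
  (`oddlevel(b; v)`). -/
noncomputable def oddlevelFrom (G : SimpleGraph V) (M : G.Subgraph) (b v : V) : ℕ∞ :=
  sInf {n : ℕ∞ | ∃ w : G.Walk b v,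
    w.IsPath ∧ IsAlt G M w ∧ Odd w.length ∧ n = (w.length : ℕ∞)}

def Outer (G : SimpleGraph V) (M : G.Subgraph) (v : V) : Prop :=
  evenlevel G M v < oddlevel G M v

/-- The blossom `B_{b,t}`, defined recursively, relative to a base function `bse`. -/
noncomputable def blossom (G : SimpleGraph V) (M : G.Subgraph) (bse : V → V) :
    ℕ → V → Set V
  | 0, _ => ∅
  | 1, _ => ∅
  | (t + 2), b =>
      {v | tenacity G M v = ((t + 2 : ℕ) : ℕ∞) ∧ bse v = b} ∪
      ⋃ v ∈ {u | (u = b ∨ (tenacity G M u = ((t + 2 : ℕ) : ℕ∞) ∧ bse u = b)) ∧ Outer G M u},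
        blossom G M bse t v

/-- The nesting depth `N(B_{b,t})`. -/
noncomputable def nestDepth (G : SimpleGraph V) (M : G.Subgraph) (bse : V → V) :
    ℕ → V → ℕ
  | 0, _ => 0
  | 1, _ => 0
  | (t + 2), b =>
      if {v | tenacity G M v = ((t + 2 : ℕ) : ℕ∞) ∧ bse v = b}.Nonempty then
        1 + sSup ((fun v => nestDepth G M bse t v) ''
          {u | (u = b ∨ (tenacity G M u = ((t + 2 : ℕ) : ℕ∞) ∧ bse u = b)) ∧ Outer G M u})
      else nestDepth G M bse t b

/-- `bse` assigns to each vertex of tenacity `< l_m` its (unique) base. -/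
def BaseFn (G : SimpleGraph V) (M : G.Subgraph) (bse : V → V) : Prop :=
  ∀ v, tenacity G M v < lm G M → IsBase G M v (bse v)

/-- `u` is a predecessor of `v`: `(u,v)` is the last edge of some `minlevel(v)` path. -/
def IsPred (G : SimpleGraph V) (M : G.Subgraph) (u v : V) : Prop :=
  ∃ (f : V) (w : G.Walk f v), f ∉ M.verts ∧ w.IsPath ∧ IsAlt G M w ∧
    (w.length : ℕ∞) = minlevel G M v ∧
    0 < w.length ∧ w.getVert (w.length - 1) = u

/-- A bridge is an edge of `G` that is not a prop. -/
def IsBridge (G : SimpleGraph V) (M : G.Subgraph) (u v : V) : Prop :=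
  G.Adj u v ∧ ¬ IsPred G M u v ∧ ¬ IsPred G M v u

/-- tenacity of an edge. -/
noncomputable def edgeTenacity (G : SimpleGraph V) (M : G.Subgraph) (u v : V) : ℕ∞ :=
  if s(u, v) ∈ M.edgeSet then oddlevel G M u + oddlevel G M v + 1
  else evenlevel G M u + evenlevel G M v + 1

lemma ten_le_of_mem_blossom (G : SimpleGraph V) (M : G.Subgraph) (bse : V → V) :
    ∀ t b v, v ∈ blossom G M bse t b → tenacity G M v ≤ (t : ℕ∞) := by
  intro t
  induction t using Nat.strong_induction_on with
  | _ t ih =>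
    match t with
    | 0 => intro b v hv; simp [blossom] at hv
    | 1 => intro b v hv; simp [blossom] at hv
    | n + 2 =>
      intro b v hv
      rw [blossom] at hv
      rcases hv with h | h
      · exact le_of_eq h.1
      · simp only [Set.mem_iUnion] at h
        obtain ⟨u, hu, hv⟩ := h
        calc tenacity G M v ≤ (n : ℕ∞) := ih n (by omega) u v hv
          _ ≤ ((n + 2 : ℕ) : ℕ∞) := by exact_mod_cast Nat.le_add_right n 2

lemma blossom_step (G : SimpleGraph V) (M : G.Subgraph) (bse : V → V)
    (b : V) (hb : Outer G M b) (t : ℕ) :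
    blossom G M bse t b ⊆ blossom G M bse (t + 2) b := by
  intro v hv
  rw [blossom]
  exact Set.mem_union_right _ (Set.mem_biUnion ⟨Or.inl rfl, hb⟩ hv)

lemma blossom_mono (G : SimpleGraph V) (M : G.Subgraph) (bse : V → V)
    (b : V) (hb : Outer G M b) (t k : ℕ) :
    blossom G M bse t b ⊆ blossom G M bse (t + 2 * k) b := by
  induction k with
  | zero => simp
  | succ k ih =>
    have h2 : t + 2 * (k + 1) = (t + 2 * k) + 2 := by ring
    rw [h2]
    exact ih.trans (blossom_step G M bse b hb (t + 2 * k))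

lemma blossom_subset (G : SimpleGraph V) (M : G.Subgraph) (bse : V → V) :
    ∀ (t' : ℕ) (b' b : V) (t : ℕ), Odd t → Odd t' → Outer G M b →
    (t : ℕ∞) < tenacity G M b → b ∈ blossom G M bse t' b' →
    blossom G M bse t b ⊆ blossom G M bse t' b' := by
  intro t'
  induction t' using Nat.strong_induction_on with
  | _ t' ih =>
    match t' with
    | 0 => intro b' b t _ _ _ _ hmem; simp [blossom] at hmem
    | 1 => intro b' b t _ _ _ _ hmem; simp [blossom] at hmem
    | n + 2 =>
      intro b' b t ht hn hb htb hmem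
      rw [blossom] at hmem
      rcases hmem with h | h
      · have htn : (t : ℕ∞) < ((n + 2 : ℕ) : ℕ∞) := h.1 ▸ htb
        have htn' : t < n + 2 := by exact_mod_cast htn
        obtain ⟨a, ha⟩ := ht
        obtain ⟨c, hc⟩ := hn
        obtain ⟨k, hk⟩ : ∃ k, n = t + 2 * k := ⟨c - a - 1, by omega⟩
        intro v hv
        have hv' : v ∈ blossom G M bse n b := by
          rw [hk]; exact blossom_mono G M bse b hb t k hv
        rw [blossom]
        exact Set.mem_union_right _ (Set.mem_biUnion ⟨Or.inr h, hb⟩ hv')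
      · simp only [Set.mem_iUnion] at h
        obtain ⟨u, hu, hmem'⟩ := h
        have hoddn : Odd n := by
          obtain ⟨c, hc⟩ := hn; exact ⟨c - 1, by omega⟩
        have hsub := ih n (by omega) u b t ht hoddn hb htb hmem'
        intro v hv
        rw [blossom]
        exact Set.mem_union_right _ (Set.mem_biUnion hu (hsub hv))

/-- If `b ∈ B_{b',t'}` then `B_{b,t} ⊂ B_{b',t'}`. -/
theorem stmt10 (G : SimpleGraph V) (M : G.Subgraph) (hM : M.IsMatching)
    (bse : V → V) (hbse : BaseFn G M bse)
    (b b' : V) (t t' : ℕ) (hodd : Odd t) (hodd' : Odd t')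
    (hb : Outer G M b) (hb' : Outer G M b')
    (htb : (t : ℕ∞) < tenacity G M b) (hlm : (t : ℕ∞) < lm G M)
    (htb' : (t' : ℕ∞) < tenacity G M b') (hlm' : (t' : ℕ∞) < lm G M)
    (hmem : b ∈ blossom G M bse t' b') :
    blossom G M bse t b ⊂ blossom G M bse t' b' := by
  have hsub := blossom_subset G M bse t' b' b t hodd hodd' hb htb hmem
  refine ⟨hsub, fun hts => ?_⟩
  have hbmem : b ∈ blossom G M bse t b := hts hmem
  have := ten_le_of_mem_blossom G M bse t b b hbmem
  exact absurd htb (not_lt.mpr this)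

end MV
end

section
/- Let (u, v) be an unmatched edge that is a bridge with tenacity(u, v) ≤ l_m. Then tenacity(u) ≤ tenacity(u, v). -/
attribute [local instance] Classical.propDecidable

variable {V : Type*} [DecidableEq V]

/-!
It suffices to show `oddlevel u ≤ evenlevel v + 1`. Let `P` be a shortest even alternating path
to `v`. If `u` is off `P`, extend `P` by the unmatched edge `(v, u)`; if `u` sits at an odd
position of `P`, the prefix of `P` up to `u` already is an odd path to `u`. If `u` sits at an even
position `j`, the prefix followed by `(u, v)` is an odd path to `v` of length `j + 1 < evenlevel v`,
ending in `u`; as `u` is not a predecessor of `v`, it is not a minlevel path, so `oddlevel v ≤ j`.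
Take a shortest odd path `S` to `v`. If `u` lies on `S`, the same parity and predecessor argument
shows that the prefix of `S` up to `u` is odd. Otherwise, follow `S` up to its first vertex `x` on
the segment of `P` between `u` and `v`, and continue along that segment: towards `u` this gives an
odd path to `u` of length at most `evenlevel v + 1`, towards `v` it would give an even path to `v`
shorter than `P`; which of the two is alternating depends only on parity.
-/

theorem ENat.sInf_mem_of_ne_top {s : Set ℕ∞} (h : sInf s ≠ ⊤) : sInf s ∈ s :=
  csInf_mem (Set.nonempty_iff_ne_empty.2 fun hs => h (hs ▸ sInf_empty))

namespace SimpleGraph.Walk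

variable {V : Type*} {G : SimpleGraph V}

theorem IsPath.append_of_support_inter {u v w : V} {p : G.Walk u v} {q : G.Walk v w}
    (hp : p.IsPath) (hq : q.IsPath) (h : ∀ x ∈ p.support, x ∈ q.support → x = v) :
    (p.append q).IsPath := by
  rw [isPath_def, support_append]
  refine hp.support_nodup.append hq.support_nodup.tail fun x hxp hxq => ?_
  have hq' := hq.support_nodup
  rw [← cons_tail_support] at hq'
  obtain rfl := h x hxp (List.mem_of_mem_tail hxq)
  exact (List.nodup_cons.mp hq').1 hxq

theorem exists_eq_append_of_first_mem {s : Set V} :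
    ∀ {u v : V} (p : G.Walk u v), (∃ x ∈ p.support, x ∈ s) →
      ∃ x ∈ s, ∃ (p₁ : G.Walk u x) (p₂ : G.Walk x v),
        p = p₁.append p₂ ∧ ∀ y ∈ p₁.support, y ∈ s → y = x
  | u, _, nil, ⟨x, hx, hxs⟩ => by
    rw [support_nil, List.mem_singleton] at hx
    subst hx
    exact ⟨x, hxs, nil, nil, rfl, by simp⟩
  | u, _, cons hadj p, ⟨x, hx, hxs⟩ => by
    by_cases hu : u ∈ s
    · exact ⟨u, hu, nil, cons hadj p, rfl, by simp⟩
    have hxp : x ∈ p.support := by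
      rcases List.mem_cons.mp hx with rfl | hx
      · exact absurd hxs hu
      · exact hx
    obtain ⟨y, hys, p₁, p₂, rfl, hfirst⟩ := exists_eq_append_of_first_mem p ⟨x, hxp, hxs⟩
    refine ⟨y, hys, cons hadj p₁, p₂, rfl, fun z hz hzs => ?_⟩
    rcases List.mem_cons.mp hz with rfl | hz
    · exact absurd hzs hu
    · exact hfirst z hz hzs

end SimpleGraph.Walk

namespace MV

open SimpleGraph Walk

section

variable {V : Type*} {G : SimpleGraph V} {M : G.Subgraph}

/-- Alternation shifted by `r`: the pattern of a subwalk that starts at position `r` of an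
alternating walk. -/
def IsAltFrom (G : SimpleGraph V) (M : G.Subgraph) (r : ℕ) {a b : V} (w : G.Walk a b) : Prop :=
  ∀ i (h : i < w.edges.length), (w.edges[i] ∈ M.edgeSet ↔ Odd (r + i))

@[simp]
theorem isAltFrom_zero_iff {a b : V} {w : G.Walk a b} : IsAltFrom G M 0 w ↔ IsAlt G M w := by
  simp [IsAltFrom, IsAlt]

theorem IsAltFrom.of_mod_two_eq {r r' : ℕ} {a b : V} {w : G.Walk a b} (h : IsAltFrom G M r w)
    (hr : r % 2 = r' % 2) : IsAltFrom G M r' w := by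
  intro i hi
  rw [h i hi, Nat.odd_iff, Nat.odd_iff]
  omega

theorem isAltFrom_append_iff {r : ℕ} {a b c : V} {p : G.Walk a b} {q : G.Walk b c} :
    IsAltFrom G M r (p.append q) ↔ IsAltFrom G M r p ∧ IsAltFrom G M (r + p.length) q := by
  simp only [IsAltFrom, edges_append, List.length_append, ← length_edges]
  refine ⟨fun h => ⟨fun i hi => ?_, fun i hi => ?_⟩, fun ⟨hp, hq⟩ i hi => ?_⟩
  · simpa [List.getElem_append_left hi] using h i (by omega)
  · simpa [List.getElem_append_right, add_assoc] using h (p.edges.length + i) (by omega)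
  · by_cases hip : i < p.edges.length
    · simpa [List.getElem_append_left hip] using hp i hip
    · have := hq (i - p.edges.length) (by omega)
      rw [List.getElem_append_right (by omega), this, Nat.add_assoc, Nat.add_sub_cancel' (by omega)]

theorem IsAltFrom.takeUntil_dropUntil {r : ℕ} {a b u : V} {p : G.Walk a b}
    (h : IsAltFrom G M r p) (hu : u ∈ p.support) :
    IsAltFrom G M r (p.takeUntil u hu) ∧
      IsAltFrom G M (r + (p.takeUntil u hu).length) (p.dropUntil u hu) :=
  isAltFrom_append_iff.1 (by rwa [take_spec])

theorem IsAltFrom.reverse {r r' : ℕ} {a b : V} {w : G.Walk a b} (h : IsAltFrom G M r w)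
    (hr : (r + r' + w.length) % 2 = 1) : IsAltFrom G M r' w.reverse := by
  intro i hi
  rw [edges_reverse, List.length_reverse] at hi
  rw [← length_edges] at hr
  simp only [edges_reverse, List.getElem_reverse]
  rw [h _ (by omega), Nat.odd_iff, Nat.odd_iff]
  omega

theorem isAltFrom_concat_iff {r : ℕ} {a b c : V} {p : G.Walk a b} (h : G.Adj b c) :
    IsAltFrom G M r (p.concat h) ↔
      IsAltFrom G M r p ∧ (s(b, c) ∈ M.edgeSet ↔ Odd (r + p.length)) := by
  rw [concat_eq_append, isAltFrom_append_iff]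
  refine and_congr_right fun _ => ⟨fun h' => by simpa using h' 0 (by simp), fun h' i hi => ?_⟩
  simp only [edges_cons, edges_nil, List.length_singleton, Nat.lt_one_iff] at hi
  subst hi
  simpa using h'

theorem IsAlt.concat {a b c : V} {p : G.Walk a b} (hp : IsAlt G M p) (he : Even p.length)
    (h : G.Adj b c) (hunm : s(b, c) ∉ M.edgeSet) : IsAlt G M (p.concat h) := by
  rw [← isAltFrom_zero_iff, isAltFrom_concat_iff, zero_add, isAltFrom_zero_iff]
  exact ⟨hp, iff_of_false hunm (Nat.not_odd_iff_even.2 he)⟩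

theorem evenlevel_le_length {f v : V} {w : G.Walk f v} (hf : f ∉ M.verts) (hw : w.IsPath)
    (ha : IsAlt G M w) (he : Even w.length) : evenlevel G M v ≤ w.length :=
  sInf_le ⟨f, w, hf, hw, ha, he, rfl⟩

theorem oddlevel_le_length {f v : V} {w : G.Walk f v} (hf : f ∉ M.verts) (hw : w.IsPath)
    (ha : IsAlt G M w) (ho : Odd w.length) : oddlevel G M v ≤ w.length :=
  sInf_le ⟨f, w, hf, hw, ha, ho, rfl⟩

theorem exists_evenlevel_path {v : V} (h : evenlevel G M v ≠ ⊤) :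
    ∃ (f : V) (w : G.Walk f v), f ∉ M.verts ∧ w.IsPath ∧ IsAlt G M w ∧ Even w.length ∧
      (w.length : ℕ∞) = evenlevel G M v := by
  obtain ⟨f, w, hf, hw, ha, he, hl⟩ := ENat.sInf_mem_of_ne_top h
  exact ⟨f, w, hf, hw, ha, he, hl.symm⟩

theorem exists_oddlevel_path {v : V} (h : oddlevel G M v ≠ ⊤) :
    ∃ (f : V) (w : G.Walk f v), f ∉ M.verts ∧ w.IsPath ∧ IsAlt G M w ∧ Odd w.length ∧
      (w.length : ℕ∞) = oddlevel G M v := by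
  obtain ⟨f, w, hf, hw, ha, ho, hl⟩ := ENat.sInf_mem_of_ne_top h
  exact ⟨f, w, hf, hw, ha, ho, hl.symm⟩

variable {u v : V}

theorem oddlevel_lt_of_not_isPred (hpred : ¬IsPred G M u v) (hadj : G.Adj u v)
    (hunm : s(u, v) ∉ M.edgeSet) {f : V} {p : G.Walk f u} (hf : f ∉ M.verts) (hp : p.IsPath)
    (ha : IsAlt G M p) (he : Even p.length) (hv : v ∉ p.support)
    (hlt : ((p.length + 1 : ℕ) : ℕ∞) < evenlevel G M v) :
    oddlevel G M v < (p.length + 1 : ℕ) := by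
  have hq : (p.concat hadj).IsPath := hp.concat hv hadj
  have hqa : IsAlt G M (p.concat hadj) := ha.concat he hadj hunm
  have hql : (p.concat hadj).length = p.length + 1 := length_concat p hadj
  have hle := oddlevel_le_length hf hq hqa (hql ▸ he.add_one)
  rw [hql] at hle
  refine hle.lt_of_ne fun heq => hpred ⟨f, p.concat hadj, hf, hq, hqa, ?_, by omega, ?_⟩
  · rw [minlevel, heq, hql, min_eq_right hlt.le]
  · exact penultimate_concat p hadj

theorem oddlevel_le_of_mem_oddlevel_path (hpred : ¬IsPred G M u v) (hadj : G.Adj u v)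
    (hunm : s(u, v) ∉ M.edgeSet) {g : V} {S : G.Walk g v} (hg : g ∉ M.verts) (hS : S.IsPath)
    (hSa : IsAlt G M S) (hSl : (S.length : ℕ∞) = oddlevel G M v)
    (hlt : (S.length : ℕ∞) < evenlevel G M v) (hu : u ∈ S.support) :
    oddlevel G M u ≤ S.length := by
  have hlen : (S.takeUntil u hu).length < S.length := length_takeUntil_lt_length hu hadj.ne
  have hS₁ : (S.takeUntil u hu).IsPath := hS.takeUntil hu
  have hS₁a : IsAlt G M (S.takeUntil u hu) := by
    simpa using ((isAltFrom_zero_iff.2 hSa).takeUntil_dropUntil hu).1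
  rcases Nat.even_or_odd (S.takeUntil u hu).length with he | ho
  · have hv := oddlevel_lt_of_not_isPred hpred hadj hunm hg hS₁ hS₁a he
      (endpoint_notMem_support_takeUntil hS hu hadj.ne')
      (lt_of_le_of_lt (by exact_mod_cast hlen) hlt)
    rw [← hSl, Nat.cast_lt] at hv
    omega
  · exact (oddlevel_le_length hg hS₁ hS₁a ho).trans (by exact_mod_cast hlen.le)

theorem oddlevel_le_length_add_length_of_notMem {g : V} {S : G.Walk g v} {R : G.Walk u v}
    (hg : g ∉ M.verts) (hS : S.IsPath) (hSa : IsAlt G M S) (hSo : Odd S.length)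
    (hR : R.IsPath) (hRa : IsAlt G M R) (hRe : Even R.length) (huS : u ∉ S.support)
    (hle : ((S.length + R.length : ℕ) : ℕ∞) ≤ evenlevel G M v) :
    oddlevel G M u ≤ (S.length + R.length : ℕ) := by
  obtain ⟨x, hxT, S₁, S₂, rfl, hfirst⟩ := S.exists_eq_append_of_first_mem
    (s := {y | y ∈ R.reverse.support}) ⟨v, S.end_mem_support, R.reverse.start_mem_support⟩
  have hxu : x ≠ u := by
    rintro rfl
    exact huS (by simp)
  have hS₁ : S₁.IsPath := hS.of_append_left
  obtain ⟨hS₁a, -⟩ := isAltFrom_append_iff.1 (isAltFrom_zero_iff.2 hSa)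
  have hT : R.reverse.IsPath := hR.reverse
  have hTa : IsAltFrom G M 1 R.reverse :=
    (isAltFrom_zero_iff.2 hRa).reverse (by rw [Nat.even_iff] at hRe; omega)
  obtain ⟨hT₁a, hT₂a⟩ := hTa.takeUntil_dropUntil hxT
  have hc : (R.reverse.takeUntil x hxT).length < R.length := by
    simpa using length_takeUntil_lt_length hxT hxu
  have hcd : (R.reverse.takeUntil x hxT).length + (R.reverse.dropUntil x hxT).length
      = R.length := by
    rw [← length_append, take_spec, length_reverse]
  rw [length_append] at hle ⊢
  rw [length_append, Nat.odd_iff] at hSo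
  rw [Nat.even_iff] at hRe
  -- `x` is the first vertex of `S` on `R`; by parity, either returning from `x` to `v` along `R`
  -- or continuing from `x` to `u` along `R` yields an alternating path.
  rcases Nat.even_or_odd (S₁.length + (R.reverse.takeUntil x hxT).length) with he | ho
  · exfalso
    have hW : (S₁.append (R.reverse.takeUntil x hxT).reverse).IsPath :=
      hS₁.append_of_support_inter (hT.takeUntil hxT).reverse fun y hy hy' =>
        hfirst y hy (support_takeUntil_subset_support _ hxT (by simpa using hy'))
    have hWa : IsAlt G M (S₁.append (R.reverse.takeUntil x hxT).reverse) := by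
      rw [← isAltFrom_zero_iff, isAltFrom_append_iff]
      exact ⟨hS₁a, hT₁a.reverse (by rw [Nat.even_iff] at he; omega)⟩
    have hlev := evenlevel_le_length hg hW hWa (by simpa using he)
    rw [length_append, length_reverse] at hlev
    exact absurd (hle.trans hlev) (by norm_cast; omega)
  · have hW : (S₁.append (R.reverse.dropUntil x hxT)).IsPath :=
      hS₁.append_of_support_inter (hT.dropUntil hxT) fun y hy hy' =>
        hfirst y hy (support_dropUntil_subset_support _ hxT hy')
    have hWa : IsAlt G M (S₁.append (R.reverse.dropUntil x hxT)) := by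
      rw [← isAltFrom_zero_iff, isAltFrom_append_iff]
      exact ⟨hS₁a, hT₂a.of_mod_two_eq (by rw [Nat.odd_iff] at ho; omega)⟩
    refine (oddlevel_le_length hg hW hWa ?_).trans ?_
    · rw [length_append, Nat.odd_iff]
      rw [Nat.odd_iff] at ho
      omega
    · rw [length_append]
      exact_mod_cast (by omega)

theorem oddlevel_le_evenlevel_add_one_of_not_isPred (hadj : G.Adj u v)
    (hunm : s(u, v) ∉ M.edgeSet) (hpred : ¬IsPred G M u v) :
    oddlevel G M u ≤ evenlevel G M v + 1 := by
  rcases eq_or_ne (evenlevel G M v) ⊤ with htop | htop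
  · simp [htop]
  obtain ⟨f, P, hf, hP, hPa, hPe, hPl⟩ := exists_evenlevel_path htop
  rw [← hPl, ← Nat.cast_one, ← Nat.cast_add]
  by_cases hu : u ∈ P.support
  swap
  · have hW : (P.concat hadj.symm).IsPath := hP.concat hu hadj.symm
    have hWa := hPa.concat hPe hadj.symm (by rwa [Sym2.eq_swap])
    exact (oddlevel_le_length hf hW hWa (by simpa using hPe.add_one)).trans (by simp)
  obtain ⟨hP₁a, hP₂a⟩ := (isAltFrom_zero_iff.2 hPa).takeUntil_dropUntil hu
  rw [isAltFrom_zero_iff] at hP₁a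
  have hlen : (P.takeUntil u hu).length + (P.dropUntil u hu).length = P.length := by
    rw [← length_append, take_spec]
  have hj : (P.takeUntil u hu).length < P.length := length_takeUntil_lt_length hu hadj.ne
  rw [Nat.even_iff] at hPe
  rcases Nat.even_or_odd (P.takeUntil u hu).length with hje | hjo
  swap
  · exact (oddlevel_le_length hf (hP.takeUntil hu) hP₁a hjo).trans (by exact_mod_cast (by omega))
  have hv := oddlevel_lt_of_not_isPred hpred hadj hunm hf (hP.takeUntil hu) hP₁a hje
    (endpoint_notMem_support_takeUntil hP hu hadj.ne')
    (by rw [← hPl, Nat.cast_lt]; rw [Nat.even_iff] at hje; omega)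
  obtain ⟨g, S, hg, hS, hSa, hSo, hSl⟩ := exists_oddlevel_path (ne_top_of_lt hv)
  rw [← hSl, Nat.cast_lt] at hv
  rw [Nat.odd_iff] at hSo
  rw [Nat.even_iff] at hje
  by_cases huS : u ∈ S.support
  · refine (oddlevel_le_of_mem_oddlevel_path hpred hadj hunm hg hS hSa hSl ?_ huS).trans ?_
    · rw [← hPl, Nat.cast_lt]; omega
    · exact_mod_cast (by omega)
  · have hR : IsAlt G M (P.dropUntil u hu) :=
      isAltFrom_zero_iff.1 (hP₂a.of_mod_two_eq (by omega))
    refine (oddlevel_le_length_add_length_of_notMem hg hS hSa (Nat.odd_iff.2 hSo)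
      (hP.dropUntil hu) hR (Nat.even_iff.2 (by omega)) huS ?_).trans ?_
    · rw [← hPl, Nat.cast_le]; omega
    · exact_mod_cast (by omega)

end

theorem stmt16_general (G : SimpleGraph V) (M : G.Subgraph)
    (u v : V) (hadj : G.Adj u v) (hunm : s(u, v) ∉ M.edgeSet)
    (hbr : IsBridge G M u v) :
    tenacity G M u ≤ evenlevel G M u + evenlevel G M v + 1 := by
  rw [tenacity, add_assoc]
  exact add_le_add_right (oddlevel_le_evenlevel_add_one_of_not_isPred hadj hunm hbr.2.1) _

/-- For an unmatched edge `(u,v)` that is a bridge with `tenacity(u,v) ≤ l_m`, we have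
`tenacity(u) ≤ tenacity(u,v)`. -/
theorem stmt16 (G : SimpleGraph V) (M : G.Subgraph) (hM : M.IsMatching)
    (u v : V) (hadj : G.Adj u v) (hunm : s(u, v) ∉ M.edgeSet)
    (hbr : IsBridge G M u v)
    (hlm : evenlevel G M u + evenlevel G M v + 1 ≤ lm G M) :
    tenacity G M u ≤ evenlevel G M u + evenlevel G M v + 1 :=
  stmt16_general G M u v hadj hunm hbr

end MV
end
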